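/- Let d be a finite word and v an infinite word over a finite alphabet, and let ≺ be any linear order on infinite words such that for any letter t and infinite words u, w: if t ∈ T⁺ then tu ≺ tw iff u ≺ w, and if t ∈ T⁻ then tu ≺ tw iff w ≺ u (where T⁺, T⁻ partition the alphabet, and words with different first letters are compared by their first letters). Then the following are equivalent: (a) v ≻ d^∞ (the infinite periodic word); (b) v ≻ d^m v for all m ≥ 1; (c) v ≻ d v. -/
import Mathlib


/-- `m`-fold concatenation of the word `a`. -/
def wpow {α : Type*} (a : List α) (m : ℕ) : List α := (List.replicate m a).flatten

/-- A finite word is primitive if it is not a power `a^m` with `m > 1`. -/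
def Primitive {α : Type*} (w : List α) : Prop := ¬ ∃ a m, 1 < m ∧ w = wpow a m

/-- The signed order on infinite `k`-ary words determined by the signature `neg`
(`neg t = true` means `σ_t = -`): `v ≺ w` iff at the first index `j` where they differ,
`v j < w j` when the number of earlier letters with negative sign is even,
and `v j > w j` when it is odd. -/
def sLess {k : ℕ} (neg : Fin k → Bool) (v w : ℕ → Fin k) : Prop :=
  ∃ j, (∀ i < j, v i = w i) ∧
    (if ((Finset.range j).filter (fun i => neg (v i) = true)).card % 2 = 0
      then v j < w j else w j < v j)

/-- The periodic infinite word `d^∞` with period a nonempty finite word `d`. -/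
def periodic {k : ℕ} (d : List (Fin k)) (hd : 0 < d.length) : ℕ → Fin k :=
  fun n => d.get ⟨n % d.length, Nat.mod_lt _ hd⟩

/-- The infinite word obtained by prepending the finite word `d` to the infinite word `v`. -/
def prepend {k : ℕ} (d : List (Fin k)) (v : ℕ → Fin k) : ℕ → Fin k :=
  fun n => if h : n < d.length then d.get ⟨n, h⟩ else v (n - d.length)

section Helpers

lemma cnt_congr {k : ℕ} (neg : Fin k → Bool) {v w : ℕ → Fin k} {j : ℕ}
    (h : ∀ i < j, v i = w i) :
    ((Finset.range j).filter (fun i => neg (v i) = true)).card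
      = ((Finset.range j).filter (fun i => neg (w i) = true)).card := by
  congr 1
  apply Finset.filter_congr
  intro i hi
  rw [h i (Finset.mem_range.mp hi)]

lemma sLess_irrefl {k : ℕ} (neg : Fin k → Bool) (v : ℕ → Fin k) : ¬ sLess neg v v := by
  rintro ⟨j, -, h⟩
  split at h <;> exact lt_irrefl _ h

lemma sLess_asymm {k : ℕ} (neg : Fin k → Bool) {v w : ℕ → Fin k}
    (h1 : sLess neg v w) (h2 : sLess neg w v) : False := by
  obtain ⟨j1, a1, c1⟩ := h1
  obtain ⟨j2, a2, c2⟩ := h2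
  have hne1 : v j1 ≠ w j1 := by
    split at c1
    · exact ne_of_lt c1
    · exact (ne_of_lt c1).symm
  have hne2 : w j2 ≠ v j2 := by
    split at c2
    · exact ne_of_lt c2
    · exact (ne_of_lt c2).symm
  have hj : j1 = j2 := by
    by_contra hne
    rcases Nat.lt_or_ge j1 j2 with h | h
    · exact hne1 (a2 j1 h).symm
    · exact hne2 (a1 j2 (lt_of_le_of_ne h (Ne.symm hne))).symm
  subst hj
  rw [cnt_congr neg a2] at c2
  by_cases hpar : ((Finset.range j1).filter (fun i => neg (v i) = true)).card % 2 = 0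
  · rw [if_pos hpar] at c1 c2; exact absurd c2 (not_lt.mpr c1.le)
  · rw [if_neg hpar] at c1 c2; exact absurd c2 (not_lt.mpr c1.le)

lemma sLess_total {k : ℕ} (neg : Fin k → Bool) {v w : ℕ → Fin k} (h : v ≠ w) :
    sLess neg v w ∨ sLess neg w v := by
  have hex : ∃ n, v n ≠ w n := by
    by_contra hc; push_neg at hc; exact h (funext hc)
  classical
  have hj : v (Nat.find hex) ≠ w (Nat.find hex) := Nat.find_spec hex
  set j := Nat.find hex with hjdef
  have hag : ∀ i < j, v i = w i := fun i hi => not_ne_iff.mp (Nat.find_min hex hi)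
  rcases lt_or_gt_of_ne hj with hlt | hgt
  · by_cases hpar : ((Finset.range j).filter (fun i => neg (v i) = true)).card % 2 = 0
    · exact Or.inl ⟨j, hag, by rw [if_pos hpar]; exact hlt⟩
    · refine Or.inr ⟨j, fun i hi => (hag i hi).symm, ?_⟩
      rw [← cnt_congr neg hag, if_neg hpar]; exact hlt
  · by_cases hpar : ((Finset.range j).filter (fun i => neg (v i) = true)).card % 2 = 0
    · refine Or.inr ⟨j, fun i hi => (hag i hi).symm, ?_⟩
      rw [← cnt_congr neg hag, if_pos hpar]; exact hgt
    · exact Or.inl ⟨j, hag, by rw [if_neg hpar]; exact hgt⟩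

lemma periodic_shift {k : ℕ} (d : List (Fin k)) (hd : 0 < d.length) {i : ℕ}
    (h : d.length ≤ i) : periodic d hd i = periodic d hd (i - d.length) := by
  simp only [periodic]
  congr 1
  exact Fin.ext (Nat.mod_eq_sub_mod h)

lemma prepend_periodic {k : ℕ} (d : List (Fin k)) (hd : 0 < d.length) :
    prepend d (periodic d hd) = periodic d hd := by
  funext n
  simp only [prepend]
  split
  · next h =>
    simp only [periodic]
    congr 1
    exact Fin.ext (Nat.mod_eq_of_lt h).symm
  · next h => exact (periodic_shift d hd (le_of_not_gt h)).symm

lemma prepend_append {k : ℕ} (a b : List (Fin k)) (v : ℕ → Fin k) :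
    prepend (a ++ b) v = prepend a (prepend b v) := by
  funext n
  simp only [prepend, List.get_eq_getElem, List.length_append]
  by_cases h1 : n < a.length
  · rw [dif_pos (by omega), dif_pos h1, List.getElem_append_left h1]
  · by_cases h2 : n < a.length + b.length
    · rw [dif_pos h2, dif_neg h1, dif_pos (by omega : n - a.length < b.length)]
      rw [List.getElem_append_right (le_of_not_gt h1)]
    · rw [dif_neg h2, dif_neg h1, dif_neg (by omega : ¬ n - a.length < b.length)]
      congr 1
      omega

lemma wpow_succ {k : ℕ} (d : List (Fin k)) (m : ℕ) :
    wpow d (m + 1) = d ++ wpow d m := by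
  simp [wpow, List.replicate_succ]

lemma wpow_zero {k : ℕ} (d : List (Fin k)) : wpow d 0 = [] := rfl

lemma wpow_one {k : ℕ} (d : List (Fin k)) : wpow d 1 = d := by
  simp [wpow]

lemma prepend_nil {k : ℕ} (v : ℕ → Fin k) : prepend [] v = v := by
  funext n
  simp [prepend]

lemma agree_prepend {k : ℕ} (d : List (Fin k)) (hd : 0 < d.length) {v : ℕ → Fin k} {j : ℕ}
    (h : ∀ i < j, v i = periodic d hd i) :
    ∀ i < j + d.length, prepend d v i = periodic d hd i := by
  intro i hi
  simp only [prepend]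
  split
  · next hlt =>
    simp only [periodic]
    congr 1
    exact Fin.ext (Nat.mod_eq_of_lt hlt).symm
  · next hge =>
    rw [h (i - d.length) (by omega), ← periodic_shift d hd (le_of_not_gt hge)]

lemma agree_wpow {k : ℕ} (d : List (Fin k)) (hd : 0 < d.length) {v : ℕ → Fin k} {j : ℕ}
    (h : ∀ i < j, v i = periodic d hd i) (m : ℕ) :
    ∀ i < j + m * d.length, prepend (wpow d m) v i = periodic d hd i := by
  induction m with
  | zero => simpa [wpow_zero, prepend_nil] using h
  | succ m ih =>
    rw [wpow_succ, prepend_append]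
    intro i hi
    exact agree_prepend d hd ih i (by rw [Nat.succ_mul] at hi; omega)

/-- If `d^∞ ≺ v` then `d^m v ≺ v` for all `m ≥ 1`. -/
lemma main_ab {k : ℕ} (neg : Fin k → Bool) (d : List (Fin k)) (hd : 0 < d.length)
    {v : ℕ → Fin k} (h : sLess neg (periodic d hd) v) (m : ℕ) (hm : 1 ≤ m) :
    sLess neg (prepend (wpow d m) v) v := by
  obtain ⟨j, hag, hcmp⟩ := h
  have hag' : ∀ i < j, v i = periodic d hd i := fun i hi => (hag i hi).symm
  have hw := agree_wpow d hd hag' m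
  have hjlt : j < j + m * d.length := by
    have : 0 < m * d.length := Nat.mul_pos hm hd
    omega
  refine ⟨j, fun i hi => by rw [hw i (by omega), ← hag' i hi], ?_⟩
  have hwj : prepend (wpow d m) v j = periodic d hd j := hw j hjlt
  rw [cnt_congr neg (fun i hi => hw i (by omega)), hwj]
  exact hcmp

/-- If `v ≺ d^∞` then `v ≺ d v`. -/
lemma main_c {k : ℕ} (neg : Fin k → Bool) (d : List (Fin k)) (hd : 0 < d.length)
    {v : ℕ → Fin k} (h : sLess neg v (periodic d hd)) :
    sLess neg v (prepend d v) := by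
  obtain ⟨j, hag, hcmp⟩ := h
  have hw := agree_prepend d hd hag
  refine ⟨j, fun i hi => by rw [hw i (by omega), ← hag i hi], ?_⟩
  rw [hw j (by omega)]
  exact hcmp

end Helpers

/-- For a nonempty finite word `d` and infinite word `v`, the following are equivalent:
(a) `v ≻ d^∞`; (b) `v ≻ d^m v` for all `m ≥ 1`; (c) `v ≻ d v`. -/
theorem stmt2 (k : ℕ) (neg : Fin k → Bool) (d : List (Fin k)) (hd : 0 < d.length)
    (v : ℕ → Fin k) :
    List.TFAE [sLess neg (periodic d hd) v,
      ∀ m, 1 ≤ m → sLess neg (prepend (wpow d m) v) v,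
      sLess neg (prepend d v) v] := by
  tfae_have 1 → 2 := fun h m hm => main_ab neg d hd h m hm
  tfae_have 2 → 3 := fun h => by
    have := h 1 le_rfl
    rwa [wpow_one] at this
  tfae_have 3 → 1 := by
    intro h3
    by_cases hvp : v = periodic d hd
    · subst hvp
      rw [prepend_periodic] at h3
      exact absurd h3 (sLess_irrefl neg _)
    · rcases sLess_total neg (Ne.symm hvp) with h | h
      · exact h
      · exact absurd (sLess_asymm neg h3 (main_c neg d hd h)) id
  tfae_finish
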